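/- Let β | τ² ~ N(0, (σ²/λ₂)(1−τ²)) and let τ² have the truncated inverse-gamma density on (0,1) proportional to (τ²)^{-3/2} exp{−(λ₁²/(8σ²λ₂)) τ^{-2}}. Then the marginal density of β is proportional to exp{−λ₂β²/(2σ²) − λ₁|β|/(2σ²)}, i.e., the one-dimensional commonly-scaled elastic net prior. -/

import Mathlib

/-!
Substituting `t = (1 + w²)⁻¹` turns the mixture integral into a multiple of
`∫₀^∞ exp (-(a w² + p / w²)) dw` with `a = λ₁² / (8σ²λ₂)` and `p = λ₂β² / (2σ²)`.
By the Cauchy–Schlömilch argument this integral is `√(π / a) / 2 · exp (-2 √(p a))`: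
it is invariant under `w ↦ √(p / a) / w`, and averaging the two forms produces the Jacobian of
`y = √a w - √p / w`, which reduces it to the Gaussian integral. Finally `2 √(p a) = λ₁ |β| / (2σ²)`.
-/

open MeasureTheory Real Set

noncomputable def normalPDF0 (v x : ℝ) : ℝ :=
  (Real.sqrt (2 * Real.pi * v))⁻¹ * Real.exp (-x ^ 2 / (2 * v))

section Substitutions

variable {E : Type*} [NormedAddCommGroup E] [NormedSpace ℝ E]

lemma hasDerivWithinAt_const_div_Ioi (s : ℝ) {x : ℝ} (hx : x ∈ Ioi (0 : ℝ)) :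
    HasDerivWithinAt (fun y => s / y) (-(s / x ^ 2)) (Ioi 0) x := by
  have := ((hasDerivAt_inv (mem_Ioi.1 hx).ne').const_mul s).hasDerivWithinAt (s := Ioi 0)
  simpa [div_eq_mul_inv] using this

lemma injOn_const_div_Ioi {s : ℝ} (hs : s ≠ 0) : InjOn (fun x : ℝ => s / x) (Ioi 0) :=
  fun x _ y _ hxy => inv_injective (mul_left_cancel₀ hs (by simpa [div_eq_mul_inv] using hxy))

lemma image_const_div_Ioi {s : ℝ} (hs : 0 < s) : (fun x : ℝ => s / x) '' Ioi 0 = Ioi 0 := by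
  refine Subset.antisymm (image_subset_iff.2 fun x hx => div_pos hs hx) fun y hy => ?_
  exact ⟨s / y, div_pos hs hy, div_div_cancel₀ hs.ne'⟩

lemma integral_Ioi_comp_const_div {s : ℝ} (hs : 0 < s) (f : ℝ → E) :
    ∫ x in Ioi 0, (s / x ^ 2) • f (s / x) = ∫ x in Ioi 0, f x := by
  have h := integral_image_eq_integral_abs_deriv_smul measurableSet_Ioi
    (fun x hx => hasDerivWithinAt_const_div_Ioi s hx) (injOn_const_div_Ioi hs.ne') f
  rw [image_const_div_Ioi hs] at h
  rw [h]
  refine setIntegral_congr_fun measurableSet_Ioi fun x hx => ?_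
  have : 0 < x := hx
  rw [abs_neg, abs_of_pos (by positivity)]

lemma integrableOn_Ioi_comp_const_div_iff {s : ℝ} (hs : 0 < s) (f : ℝ → E) :
    IntegrableOn (fun x => (s / x ^ 2) • f (s / x)) (Ioi 0) ↔ IntegrableOn f (Ioi 0) := by
  have h := integrableOn_image_iff_integrableOn_abs_deriv_smul measurableSet_Ioi
    (fun x hx => hasDerivWithinAt_const_div_Ioi s hx) (injOn_const_div_Ioi hs.ne') f
  rw [image_const_div_Ioi hs] at h
  rw [h]
  refine integrableOn_congr_fun (fun x hx => ?_) measurableSet_Ioi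
  have : 0 < x := hx
  rw [abs_neg, abs_of_pos (by positivity)]

lemma integral_Ioi_div_sq_smul_of_comp_div_eq {s : ℝ} (hs : 0 < s) {f : ℝ → E}
    (hf : ∀ x ∈ Ioi 0, f (s / x) = f x) :
    ∫ x in Ioi 0, (s / x ^ 2) • f x = ∫ x in Ioi 0, f x := by
  rw [← integral_Ioi_comp_const_div hs f]
  exact setIntegral_congr_fun measurableSet_Ioi fun x hx => by simp only [hf x hx]

lemma integrableOn_Ioi_div_sq_smul_of_comp_div_eq {s : ℝ} (hs : 0 < s) {f : ℝ → E}
    (hfi : IntegrableOn f (Ioi 0)) (hf : ∀ x ∈ Ioi 0, f (s / x) = f x) :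
    IntegrableOn (fun x => (s / x ^ 2) • f x) (Ioi 0) :=
  ((integrableOn_Ioi_comp_const_div_iff hs f).2 hfi).congr_fun
    (fun x hx => by simp only [hf x hx]) measurableSet_Ioi

lemma strictMonoOn_mul_sub_div {a b : ℝ} (ha : 0 < a) (hb : 0 < b) :
    StrictMonoOn (fun x : ℝ => a * x - b / x) (Ioi 0) := fun _ hx _ _ hxy =>
  sub_lt_sub (mul_lt_mul_of_pos_left hxy ha) (div_lt_div_of_pos_left hb hx hxy)

lemma image_mul_sub_div_Ioi {a b : ℝ} (ha : 0 < a) (hb : 0 < b) :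
    (fun x : ℝ => a * x - b / x) '' Ioi 0 = univ := by
  refine eq_univ_of_forall fun y => ?_
  -- the positive root of `a x² - y x - b = 0`
  set r := √(y ^ 2 + 4 * a * b)
  have hr : r ^ 2 = y ^ 2 + 4 * a * b := sq_sqrt (by positivity)
  have hyr : 0 < y + r := by nlinarith [sqrt_nonneg (y ^ 2 + 4 * a * b)]
  refine ⟨(y + r) / (2 * a), div_pos hyr (by positivity), ?_⟩
  field_simp
  nlinarith

lemma integral_Ioi_comp_mul_sub_div {a b : ℝ} (ha : 0 < a) (hb : 0 < b) (f : ℝ → E) :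
    ∫ x in Ioi 0, (a + b / x ^ 2) • f (a * x - b / x) = ∫ y, f y := by
  have hderiv : ∀ x ∈ Ioi (0 : ℝ),
      HasDerivWithinAt (fun x => a * x - b / x) (a + b / x ^ 2) (Ioi 0) x := fun x hx => by
    exact (((hasDerivAt_id x).const_mul a).hasDerivWithinAt.sub
      (hasDerivWithinAt_const_div_Ioi b hx)).congr_deriv (by ring)
  have h := integral_image_eq_integral_abs_deriv_smul measurableSet_Ioi hderiv
    (strictMonoOn_mul_sub_div ha hb).injOn f
  rw [image_mul_sub_div_Ioi ha hb, setIntegral_univ] at h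
  rw [h]
  refine setIntegral_congr_fun measurableSet_Ioi fun x hx => ?_
  have : 0 < x := hx
  rw [abs_of_pos (by positivity)]

lemma integral_Ioo_zero_one_eq_integral_Ioi_comp_inv_one_add_sq (f : ℝ → E) :
    ∫ t in Ioo 0 1, f t = ∫ w in Ioi 0, (2 * w / (1 + w ^ 2) ^ 2) • f (1 + w ^ 2)⁻¹ := by
  have hderiv : ∀ w ∈ Ioi (0 : ℝ), HasDerivWithinAt (fun w => (1 + w ^ 2)⁻¹)
      (-(2 * w) / (1 + w ^ 2) ^ 2) (Ioi 0) w := fun w _ =>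
    (((hasDerivAt_pow 2 w).const_add 1).inv (by positivity)).hasDerivWithinAt.congr_deriv
      (by ring)
  have hanti : StrictAntiOn (fun w : ℝ => (1 + w ^ 2)⁻¹) (Ioi 0) := fun x hx y _ hxy =>
    inv_strictAnti₀ (by positivity) (by gcongr; exact le_of_lt hx)
  have himage : (fun w : ℝ => (1 + w ^ 2)⁻¹) '' Ioi 0 = Ioo 0 1 := by
    refine Subset.antisymm (image_subset_iff.2 fun w hw => ?_) fun t ⟨ht0, ht1⟩ => ?_
    · have : 0 < w := hw
      exact ⟨by positivity, inv_lt_one_of_one_lt₀ (by nlinarith)⟩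
    · refine ⟨√((1 - t) / t), sqrt_pos.2 (div_pos (by linarith) ht0), ?_⟩
      simp only [sq_sqrt (div_nonneg (by linarith : 0 ≤ 1 - t) ht0.le)]
      field_simp
      ring
  have h := integral_image_eq_integral_abs_deriv_smul measurableSet_Ioi hderiv hanti.injOn f
  rw [himage] at h
  rw [h]
  refine setIntegral_congr_fun measurableSet_Ioi fun w hw => ?_
  have : 0 < w := hw
  rw [neg_div, abs_neg, abs_of_pos (by positivity)]

end Substitutions

lemma integrable_exp_neg_mul_sq_add_div_sq {p q : ℝ} (hp : 0 ≤ p) (hq : 0 < q) :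
    Integrable fun x : ℝ => exp (-(q * x ^ 2 + p / x ^ 2)) := by
  refine (integrable_exp_neg_mul_sq hq).mono' (by fun_prop) (.of_forall fun x => ?_)
  rw [norm_of_nonneg (exp_pos _).le, exp_le_exp, neg_mul, neg_le_neg_iff]
  have : 0 ≤ p / x ^ 2 := by positivity
  linarith

lemma integral_Ioi_exp_neg_mul_sq_add_div_sq_of_pos {p q : ℝ} (hp : 0 < p) (hq : 0 < q) :
    ∫ x in Ioi 0, exp (-(q * x ^ 2 + p / x ^ 2)) = √(π / q) / 2 * exp (-(2 * √(p * q))) := by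
  set F : ℝ → ℝ := fun x => exp (-(q * x ^ 2 + p / x ^ 2))
  set a := √q
  set b := √p
  have ha : 0 < a := sqrt_pos.2 hq
  have hb : 0 < b := sqrt_pos.2 hp
  have ha2 : a ^ 2 = q := sq_sqrt hq.le
  have hb2 : b ^ 2 = p := sq_sqrt hp.le
  set s := b / a
  have hs : 0 < s := div_pos hb ha
  have hF : IntegrableOn F (Ioi 0) := (integrable_exp_neg_mul_sq_add_div_sq hp.le hq).integrableOn
  -- `x ↦ s / x` swaps the two terms `q x²` and `p / x²`
  have hF_inv : ∀ x ∈ Ioi 0, F (s / x) = F x := fun x hx => by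
    have : 0 < x := hx
    simp only [F, s, ← ha2, ← hb2]
    congr 2
    field_simp
    ring
  -- completing the square: `q x² + p / x² = (a x - b / x)² + 2 √(p q)`
  have hsquare : EqOn (fun x => a * F x + a * ((s / x ^ 2) • F x))
      (fun x => exp (-(2 * √(p * q))) * ((a + b / x ^ 2) • exp (-(a * x - b / x) ^ 2)))
      (Ioi 0) := fun x hx => by
    have : 0 < x := hx
    have hexp : -(q * x ^ 2 + p / x ^ 2) = -(2 * √(p * q)) + -(a * x - b / x) ^ 2 := by
      have hpq : √(p * q) = b * a := sqrt_mul hp.le q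
      rw [hpq, ← ha2, ← hb2]
      field_simp
      ring
    simp only [F, smul_eq_mul, s, hexp, exp_add]
    field_simp
  have hgauss : ∫ y : ℝ, exp (-y ^ 2) = √π := by simpa using integral_gaussian 1
  have key : a * (2 * ∫ x in Ioi 0, F x) = exp (-(2 * √(p * q))) * √π := calc
    a * (2 * ∫ x in Ioi 0, F x) = ∫ x in Ioi 0, a * F x + a * ((s / x ^ 2) • F x) := by
      rw [integral_add (hF.const_mul a)
          ((integrableOn_Ioi_div_sq_smul_of_comp_div_eq hs hF hF_inv).const_mul a),
        integral_const_mul, integral_const_mul, integral_Ioi_div_sq_smul_of_comp_div_eq hs hF_inv]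
      ring
    _ = exp (-(2 * √(p * q))) * ∫ x in Ioi 0, (a + b / x ^ 2) • exp (-(a * x - b / x) ^ 2) := by
      rw [setIntegral_congr_fun measurableSet_Ioi hsquare, integral_const_mul]
    _ = exp (-(2 * √(p * q))) * √π := by
      rw [integral_Ioi_comp_mul_sub_div ha hb (fun y => exp (-y ^ 2)), hgauss]
  rw [sqrt_div' π hq.le]
  field_simp
  linarith

lemma integral_Ioi_exp_neg_mul_sq_add_div_sq {p q : ℝ} (hp : 0 ≤ p) (hq : 0 < q) :
    ∫ x in Ioi 0, exp (-(q * x ^ 2 + p / x ^ 2)) = √(π / q) / 2 * exp (-(2 * √(p * q))) := by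
  rcases hp.eq_or_lt with rfl | hp
  · simpa using integral_gaussian_Ioi q
  · exact integral_Ioi_exp_neg_mul_sq_add_div_sq_of_pos hp hq

lemma rpow_neg_three_halves_inv {u : ℝ} (hu : 0 < u) : u⁻¹ ^ (-(3 : ℝ) / 2) = u * √u := by
  rw [inv_rpow hu.le, ← rpow_neg hu.le, show -(-(3 : ℝ) / 2) = 1 + 1 / 2 by norm_num,
    rpow_add hu, rpow_one, sqrt_eq_rpow]

lemma mixture_integrand_inv_one_add_sq {v w : ℝ} (hv : 0 < v) (hw : 0 < w) (a β : ℝ) :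
    2 * w / (1 + w ^ 2) ^ 2 * (normalPDF0 (v * (1 - (1 + w ^ 2)⁻¹)) β *
      ((1 + w ^ 2)⁻¹ ^ (-(3 : ℝ) / 2) * exp (-a / (1 + w ^ 2)⁻¹))) =
    2 / √(2 * π * v) * exp (-(β ^ 2 / (2 * v)) - a) *
      exp (-(a * w ^ 2 + β ^ 2 / (2 * v) / w ^ 2)) := by
  set u := 1 + w ^ 2
  have hu : 0 < u := by positivity
  have hvar : v * (1 - u⁻¹) = v * w ^ 2 / u := by field_simp; ring
  have hsqrt : √(2 * π * (v * w ^ 2 / u)) = √(2 * π * v) * w / √u := by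
    rw [show 2 * π * (v * w ^ 2 / u) = 2 * π * v * w ^ 2 / u by ring, sqrt_div' _ hu.le,
      sqrt_mul' _ (sq_nonneg w), sqrt_sq hw.le]
  have hexp : exp (-β ^ 2 / (2 * (v * w ^ 2 / u))) * exp (-a / u⁻¹) =
      exp (-(β ^ 2 / (2 * v)) - a) * exp (-(a * w ^ 2 + β ^ 2 / (2 * v) / w ^ 2)) := by
    rw [← exp_add, ← exp_add]
    congr 1
    field_simp
    ring
  have hcoef : 2 * w / u ^ 2 * (√(2 * π * v) * w / √u)⁻¹ * (u * √u) = 2 / √(2 * π * v) := by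
    have hs : 0 < √(2 * π * v) := sqrt_pos.2 (by positivity)
    have hsu : 0 < √u := sqrt_pos.2 hu
    field_simp
    exact sq_sqrt hu.le
  simp only [normalPDF0, hvar, hsqrt, rpow_neg_three_halves_inv hu]
  calc _ = 2 * w / u ^ 2 * (√(2 * π * v) * w / √u)⁻¹ * (u * √u) *
        (exp (-β ^ 2 / (2 * (v * w ^ 2 / u))) * exp (-a / u⁻¹)) := by ring
    _ = _ := by rw [hcoef, hexp]; ring

/-- The scale-mixture-of-normals representation of the commonly-scaled elastic net prior:
mixing `N(0, (σ²/λ₂)(1-t))` over the truncated inverse-gamma density on `(0,1)` proportional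
to `t^{-3/2} exp{-(λ₁²/(8σ²λ₂))/t}` yields a marginal density proportional to
`exp{-λ₂β²/(2σ²) - λ₁|β|/(2σ²)}`. -/
theorem elastic_net_scale_mixture_common (lam1 lam2 sig2 : ℝ)
    (h1 : 0 < lam1) (h2 : 0 < lam2) (hs : 0 < sig2) :
    ∃ C : ℝ, 0 < C ∧ ∀ β : ℝ,
      (∫ t in Set.Ioo (0 : ℝ) 1,
          normalPDF0 (sig2 / lam2 * (1 - t)) β *
            (t ^ (-(3 : ℝ) / 2) * Real.exp (-(lam1 ^ 2 / (8 * sig2 * lam2)) / t)))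
        = C * Real.exp (-(lam2 * β ^ 2) / (2 * sig2) - lam1 * |β| / (2 * sig2)) := by
  set v := sig2 / lam2
  set a := lam1 ^ 2 / (8 * sig2 * lam2)
  have hv : 0 < v := by positivity
  have ha : 0 < a := by positivity
  refine ⟨2 / √(2 * π * v) * exp (-a) * (√(π / a) / 2), by positivity, fun β => ?_⟩
  have hp : lam2 * β ^ 2 / (2 * sig2) = β ^ 2 / (2 * v) := by simp only [v]; field_simp
  have hpa : lam1 * |β| / (2 * sig2) = 2 * √(β ^ 2 / (2 * v) * a) := by
    rw [show β ^ 2 / (2 * v) * a = (lam1 * |β| / (4 * sig2)) ^ 2 by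
        simp only [v, a, div_pow, mul_pow, sq_abs]; field_simp; ring,
      sqrt_sq (by positivity)]
    ring
  rw [integral_Ioo_zero_one_eq_integral_Ioi_comp_inv_one_add_sq]
  simp only [smul_eq_mul]
  rw [setIntegral_congr_fun measurableSet_Ioi
      fun w hw => mixture_integrand_inv_one_add_sq hv hw a β,
    integral_const_mul, integral_Ioi_exp_neg_mul_sq_add_div_sq (by positivity) ha, neg_div, hp, hpa]
  simp only [exp_sub, exp_neg]
  ring
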